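/- arXiv:1105.2206 — 2 statements merged into one kernel-verified Lean document; each statement's English description precedes it below -/
import Mathlib

section
/- Fix constants h, H > 0, k, and let σ = h² + 2Hk. Define the 3×3 matrix-valued function t ↦ U_t by: if σ > 0, U_t = [[-t sin(τ_t)/(τ_t cos(τ_t)), t²(cos(τ_t)-1)/(τ_t² cos(τ_t)), 0], [t²(cos(τ_t)-1)/(τ_t² cos(τ_t)), t³(τ_t cos(τ_t) - sin(τ_t))/(τ_t³ cos(τ_t)), 0], [0, 0, -t]] with τ_t = t√σ. Then U_t satisfies the matrix Riccati equation U̇_t + U_t R U_t - C₁ U_t - U_t C₁ᵀ + C₂ = 0 with initial condition U₀ = 0, where R = diag(σ, 0, 0), C₁ is the matrix with (2,1)-entry 1 and all other entries 0, and C₂ = diag(1, 0, 1). -/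
/-!
Write `σ = s²` with `s > 0`. The `(1,1)`-entry of `U_t` is `a = -tan(ts)/s`, which solves the
scalar Riccati equation `a' = -1 - σ a²`; the other entries `b = (1 - sec(ts))/s²` and
`c = (ts - tan(ts))/s³` then solve `b' = a - σ a b` and `c' = 2b - σ b²`, which is exactly what
the matrix equation asks of a symmetric matrix with this block pattern. All entries are
differentiable wherever `cos(ts) ≠ 0`, in particular at `t = 0`, where they vanish; this gives
`U₀ = 0`.
-/

open Matrix Filter Topology Real

def symmBlock {α : Type*} [Zero α] (a b c d : α) : Matrix (Fin 3) (Fin 3) α :=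
  !![a, b, 0; b, c, 0; 0, 0, d]

lemma riccati_rhs_symmBlock (σ a b c d : ℝ) :
    !![0, 0, 0; 1, 0, 0; 0, 0, 0] * symmBlock a b c d
      + symmBlock a b c d * !![0, 0, 0; 1, 0, 0; 0, 0, 0]ᵀ
      - symmBlock a b c d * !![σ, 0, 0; 0, 0, 0; 0, 0, 0] * symmBlock a b c d
      - !![1, 0, 0; 0, 0, 0; 0, 0, 1]
      = symmBlock (-1 - σ * a ^ 2) (a - σ * a * b) (2 * b - σ * b ^ 2) (-1) := by
  ext i j
  fin_cases i <;> fin_cases j <;>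
    simp [symmBlock, mul_apply, Fin.sum_univ_three, -cons_mul, -mul_eq_mul_right_iff] <;> ring

lemma hasDerivAt_symmBlock_apply {a b c d : ℝ → ℝ} {a' b' c' d' t : ℝ}
    (ha : HasDerivAt a a' t) (hb : HasDerivAt b b' t) (hc : HasDerivAt c c' t)
    (hd : HasDerivAt d d' t) (i j : Fin 3) :
    HasDerivAt (fun t => symmBlock (a t) (b t) (c t) (d t) i j) (symmBlock a' b' c' d' i j) t := by
  fin_cases i <;> fin_cases j <;>
    simp only [symmBlock, Fin.zero_eta, Fin.mk_one, Fin.reduceFinMk, Fin.isValue,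
      of_apply, cons_val', cons_val, cons_val_zero, cons_val_one, cons_val_fin_one] <;>
    first | assumption | exact hasDerivAt_const t 0

lemma tendsto_symmBlock {ι : Type*} {l : Filter ι} {a b c d : ι → ℝ}
    (ha : Tendsto a l (𝓝 0)) (hb : Tendsto b l (𝓝 0)) (hc : Tendsto c l (𝓝 0))
    (hd : Tendsto d l (𝓝 0)) :
    Tendsto (fun t => symmBlock (a t) (b t) (c t) (d t)) l (𝓝 0) := by
  refine tendsto_pi_nhds.2 fun i => tendsto_pi_nhds.2 fun j => ?_
  fin_cases i <;> fin_cases j <;>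
    simp only [symmBlock, Fin.zero_eta, Fin.mk_one, Fin.reduceFinMk, Fin.isValue,
      of_apply, cons_val', cons_val, cons_val_zero, cons_val_one, cons_val_fin_one] <;>
    first | assumption | exact tendsto_const_nhds

noncomputable def riccatiA (s t : ℝ) : ℝ := -sin (t * s) / (s * cos (t * s))

noncomputable def riccatiB (s t : ℝ) : ℝ := (cos (t * s) - 1) / (s ^ 2 * cos (t * s))

noncomputable def riccatiC (s t : ℝ) : ℝ :=
  (t * s * cos (t * s) - sin (t * s)) / (s ^ 3 * cos (t * s))

lemma trig_matrix_eq_symmBlock (s t : ℝ) :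
    !![-t * sin (t * s) / ((t * s) * cos (t * s)),
        t ^ 2 * (cos (t * s) - 1) / ((t * s) ^ 2 * cos (t * s)), 0;
        t ^ 2 * (cos (t * s) - 1) / ((t * s) ^ 2 * cos (t * s)),
        t ^ 3 * ((t * s) * cos (t * s) - sin (t * s)) / ((t * s) ^ 3 * cos (t * s)), 0;
        0, 0, -t]
      = symmBlock (riccatiA s t) (riccatiB s t) (riccatiC s t) (-t) := by
  rcases eq_or_ne t 0 with rfl | ht
  · simp [symmBlock, riccatiA, riccatiB, riccatiC]
  have cancel (n : ℕ) (x y : ℝ) : t ^ n * x / ((t * s) ^ n * y) = x / (s ^ n * y) := by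
    rw [mul_pow, mul_assoc, mul_div_mul_left _ _ (pow_ne_zero n ht)]
  have entryA : -t * sin (t * s) / ((t * s) * cos (t * s)) = riccatiA s t := by
    rw [riccatiA, neg_mul_comm, mul_assoc, mul_div_mul_left _ _ ht]
  rw [entryA, cancel, cancel]
  rfl

section Derivatives

variable {s t : ℝ}

lemma hasDerivAt_riccatiA (hs : s ≠ 0) (hc : cos (t * s) ≠ 0) :
    HasDerivAt (riccatiA s) (-1 - s ^ 2 * riccatiA s t ^ 2) t := by
  have hsin := (hasDerivAt_mul_const (x := t) s).sin
  have hcos := (hasDerivAt_mul_const (x := t) s).cos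
  refine (hsin.neg.div (hcos.const_mul s) (mul_ne_zero hs hc)).congr_deriv ?_
  simp only [riccatiA, Pi.neg_apply]
  field_simp

lemma hasDerivAt_riccatiB (hs : s ≠ 0) (hc : cos (t * s) ≠ 0) :
    HasDerivAt (riccatiB s) (riccatiA s t - s ^ 2 * riccatiA s t * riccatiB s t) t := by
  have hcos := (hasDerivAt_mul_const (x := t) s).cos
  refine ((hcos.sub_const 1).div (hcos.const_mul (s ^ 2))
    (mul_ne_zero (pow_ne_zero 2 hs) hc)).congr_deriv ?_
  simp only [riccatiA, riccatiB]
  field_simp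

lemma hasDerivAt_riccatiC (hs : s ≠ 0) (hc : cos (t * s) ≠ 0) :
    HasDerivAt (riccatiC s) (2 * riccatiB s t - s ^ 2 * riccatiB s t ^ 2) t := by
  have hsin := (hasDerivAt_mul_const (x := t) s).sin
  have hcos := (hasDerivAt_mul_const (x := t) s).cos
  refine ((((hasDerivAt_mul_const s).mul hcos).sub hsin).div (hcos.const_mul (s ^ 3))
    (mul_ne_zero (pow_ne_zero 3 hs) hc)).congr_deriv ?_
  simp only [riccatiB, Pi.sub_apply, Pi.mul_apply]
  have hsc := sin_sq_add_cos_sq (t * s)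
  -- otherwise `field_simp` rewrites `t * s` to `s * t` inside `sin` and `cos` and loses `hc`
  generalize sin (t * s) = x at hsc ⊢
  generalize cos (t * s) = y at hc hsc ⊢
  field_simp
  linear_combination -hsc

end Derivatives

theorem stmt6_general (σ : ℝ) (hσ : 0 < σ)
    (C₁ C₂ R : Matrix (Fin 3) (Fin 3) ℝ)
    (hC₁ : C₁ = !![0, 0, 0; 1, 0, 0; 0, 0, 0])
    (hC₂ : C₂ = !![1, 0, 0; 0, 0, 0; 0, 0, 1])
    (hR : R = !![σ, 0, 0; 0, 0, 0; 0, 0, 0])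
    (U : ℝ → Matrix (Fin 3) (Fin 3) ℝ)
    (hU : ∀ t : ℝ,
      U t = !![-t * Real.sin (t * Real.sqrt σ) / ((t * Real.sqrt σ) * Real.cos (t * Real.sqrt σ)),
               t ^ 2 * (Real.cos (t * Real.sqrt σ) - 1) /
                 ((t * Real.sqrt σ) ^ 2 * Real.cos (t * Real.sqrt σ)), 0;
               t ^ 2 * (Real.cos (t * Real.sqrt σ) - 1) /
                 ((t * Real.sqrt σ) ^ 2 * Real.cos (t * Real.sqrt σ)),
               t ^ 3 * ((t * Real.sqrt σ) * Real.cos (t * Real.sqrt σ) - Real.sin (t * Real.sqrt σ)) /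
                 ((t * Real.sqrt σ) ^ 3 * Real.cos (t * Real.sqrt σ)), 0;
               0, 0, -t]) :
    (∀ t : ℝ, 0 < t → Real.cos (t * Real.sqrt σ) ≠ 0 → ∀ i j : Fin 3,
      HasDerivAt (fun s => U s i j)
        ((C₁ * U t + U t * C₁ᵀ - U t * R * U t - C₂) i j) t) ∧
    Filter.Tendsto U (nhdsWithin 0 (Set.Ioi 0)) (nhds 0) := by
  obtain ⟨s, hs, rfl⟩ : ∃ s, 0 < s ∧ σ = s ^ 2 := ⟨√σ, sqrt_pos.2 hσ, (sq_sqrt hσ.le).symm⟩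
  simp only [sqrt_sq hs.le] at hU ⊢
  obtain rfl : U = fun t => symmBlock (riccatiA s t) (riccatiB s t) (riccatiC s t) (-t) :=
    funext fun t => (hU t).trans (trig_matrix_eq_symmBlock s t)
  subst hC₁ hC₂ hR
  have hcos0 : cos (0 * s) ≠ 0 := by simp
  refine ⟨fun t _ hc i j => ?_, (tendsto_symmBlock ?_ ?_ ?_ ?_).mono_left nhdsWithin_le_nhds⟩
  · rw [riccati_rhs_symmBlock]
    exact hasDerivAt_symmBlock_apply (hasDerivAt_riccatiA hs.ne' hc)
      (hasDerivAt_riccatiB hs.ne' hc) (hasDerivAt_riccatiC hs.ne' hc) (hasDerivAt_neg' t) i j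
  · simpa [riccatiA] using (hasDerivAt_riccatiA hs.ne' hcos0).continuousAt.tendsto
  · simpa [riccatiB] using (hasDerivAt_riccatiB hs.ne' hcos0).continuousAt.tendsto
  · simpa [riccatiC] using (hasDerivAt_riccatiC hs.ne' hcos0).continuousAt.tendsto
  · simpa using (tendsto_neg (0 : ℝ))

/-- the explicit trigonometric matrix U_t solves the Riccati equation
U̇ + U R U - C₁ U - U C₁ᵀ + C₂ = 0 with U₀ = 0, where σ = h² + 2Hk > 0. -/
theorem stmt6 (h H k : ℝ) (hH : 0 < H)
    (σ : ℝ) (hσdef : σ = h ^ 2 + 2 * H * k) (hσ : 0 < σ)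
    (C₁ C₂ R : Matrix (Fin 3) (Fin 3) ℝ)
    (hC₁ : C₁ = !![0, 0, 0; 1, 0, 0; 0, 0, 0])
    (hC₂ : C₂ = !![1, 0, 0; 0, 0, 0; 0, 0, 1])
    (hR : R = !![σ, 0, 0; 0, 0, 0; 0, 0, 0])
    (U : ℝ → Matrix (Fin 3) (Fin 3) ℝ)
    (hU : ∀ t : ℝ,
      U t = !![-t * Real.sin (t * Real.sqrt σ) / ((t * Real.sqrt σ) * Real.cos (t * Real.sqrt σ)),
               t ^ 2 * (Real.cos (t * Real.sqrt σ) - 1) /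
                 ((t * Real.sqrt σ) ^ 2 * Real.cos (t * Real.sqrt σ)), 0;
               t ^ 2 * (Real.cos (t * Real.sqrt σ) - 1) /
                 ((t * Real.sqrt σ) ^ 2 * Real.cos (t * Real.sqrt σ)),
               t ^ 3 * ((t * Real.sqrt σ) * Real.cos (t * Real.sqrt σ) - Real.sin (t * Real.sqrt σ)) /
                 ((t * Real.sqrt σ) ^ 3 * Real.cos (t * Real.sqrt σ)), 0;
               0, 0, -t]) :
    (∀ t : ℝ, 0 < t → Real.cos (t * Real.sqrt σ) ≠ 0 → ∀ i j : Fin 3,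
      HasDerivAt (fun s => U s i j)
        ((C₁ * U t + U t * C₁ᵀ - U t * R * U t - C₂) i j) t) ∧
    Filter.Tendsto U (nhdsWithin 0 (Set.Ioi 0)) (nhds 0) :=
  stmt6_general σ hσ C₁ C₂ R hC₁ hC₂ hR U hU
end

section
/- Let S: (0,1) → Mat₃(ℝ) be defined in the σ > 0 case by S_t = [[τ₀(sin τ_t - τ_t cos τ_t)/D_t, τ₀²(1 - cos τ_t)/D_t, 0], [τ₀²(1 - cos τ_t)/D_t, τ₀³ sin τ_t/D_t, 0], [0, 0, 1/(1-t)]] where τ_t = (1-t)τ₀, τ₀ = √σ > 0, and D_t = 2 - 2cos τ_t - τ_t sin τ_t ≠ 0. Then S_t satisfies the Riccati equation Ṡ_t - R + S_t C₁ + C₁ᵀ S_t - S_t C₂ S_t = 0, where R = diag(σ, 0, 0), C₁ has a single 1 in position (2,1), and C₂ = diag(1, 0, 1). -/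
/-!
Write `s = √σ` and `x = τ_t = (1 - t) s`. The 2×2 block of `S_t` is `s f(x)`, `s² g(x)`, `s³ h(x)`
with `f = (sin x - x cos x)/D`, `g = (1 - cos x)/D`, `h = sin x/D` and `D x = 2 - 2 cos x - x sin x`.
Since `D' = sin x - x cos x` and `D'' = x sin x`, these satisfy the `s`-free system
`f' = 2g - 1 - f²`, `g' = h - f g`, `h' = -g²` (the last one by `sin² + cos² = 1`), and
`dx/dt = -s` supplies exactly the powers of `s` the Riccati equation asks for.
-/

open Matrix Real

noncomputable def riccatiDen (x : ℝ) : ℝ := 2 - 2 * cos x - x * sin x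

lemma hasDerivAt_sin_sub_mul_cos (x : ℝ) :
    HasDerivAt (fun y => sin y - y * cos y) (x * sin x) x := by
  refine ((hasDerivAt_sin x).sub ((hasDerivAt_id x).mul (hasDerivAt_cos x))).congr_deriv ?_
  simp only [id]; ring

lemma hasDerivAt_riccatiDen (x : ℝ) :
    HasDerivAt riccatiDen (sin x - x * cos x) x := by
  refine ((((hasDerivAt_cos x).const_mul 2).const_sub 2).sub
    ((hasDerivAt_id x).mul (hasDerivAt_sin x))).congr_deriv ?_
  simp only [id]; ring

section

variable {x : ℝ}

lemma hasDerivAt_sin_sub_mul_cos_div_riccatiDen (hx : riccatiDen x ≠ 0) :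
    HasDerivAt (fun y => (sin y - y * cos y) / riccatiDen y)
      (2 * ((1 - cos x) / riccatiDen x) - 1 - ((sin x - x * cos x) / riccatiDen x) ^ 2) x := by
  refine ((hasDerivAt_sin_sub_mul_cos x).div (hasDerivAt_riccatiDen x) hx).congr_deriv ?_
  field_simp
  rw [riccatiDen]
  ring

lemma hasDerivAt_one_sub_cos_div_riccatiDen (hx : riccatiDen x ≠ 0) :
    HasDerivAt (fun y => (1 - cos y) / riccatiDen y)
      (sin x / riccatiDen x - (sin x - x * cos x) / riccatiDen x * ((1 - cos x) / riccatiDen x)) x := by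
  refine (((hasDerivAt_cos x).const_sub 1).div (hasDerivAt_riccatiDen x) hx).congr_deriv ?_
  field_simp

lemma hasDerivAt_sin_div_riccatiDen (hx : riccatiDen x ≠ 0) :
    HasDerivAt (fun y => sin y / riccatiDen y) (-((1 - cos x) / riccatiDen x) ^ 2) x := by
  refine ((hasDerivAt_sin x).div (hasDerivAt_riccatiDen x) hx).congr_deriv ?_
  field_simp
  rw [riccatiDen]
  linear_combination (-1) * sin_sq_add_cos_sq x

end

lemma riccati_rhs_of_symm_block (r a b c e : ℝ) :
    !![r, 0, 0; 0, 0, 0; 0, 0, 0] - !![a, b, 0; b, c, 0; 0, 0, e] * !![0, 0, 0; 1, 0, 0; 0, 0, 0]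
      - (!![0, 0, 0; 1, 0, 0; 0, 0, 0] : Matrix (Fin 3) (Fin 3) ℝ)ᵀ * !![a, b, 0; b, c, 0; 0, 0, e]
      + !![a, b, 0; b, c, 0; 0, 0, e] * !![1, 0, 0; 0, 0, 0; 0, 0, 1] * !![a, b, 0; b, c, 0; 0, 0, e]
      = !![r - 2 * b + a ^ 2, a * b - c, 0; a * b - c, b ^ 2, 0; 0, 0, e ^ 2] := by
  ext i j
  fin_cases i <;> fin_cases j <;> simp [Matrix.mul_apply, Fin.sum_univ_three] <;> ring

lemma HasDerivAt.comp_one_sub_mul {φ : ℝ → ℝ} {φ' s t : ℝ} (h : HasDerivAt φ φ' ((1 - t) * s)) :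
    HasDerivAt (fun u => φ ((1 - u) * s)) (-(s * φ')) t := by
  have hτ : HasDerivAt (fun u : ℝ => (1 - u) * s) (-s) t := by
    simpa using ((hasDerivAt_id t).const_sub 1).mul_const s
  exact (h.comp t hτ).congr_deriv (by ring)

lemma hasDerivAt_one_div_one_sub {t : ℝ} (ht : t ≠ 1) :
    HasDerivAt (fun u => 1 / (1 - u)) ((1 / (1 - t)) ^ 2) t := by
  have ht1 : 1 - t ≠ 0 := sub_ne_zero.mpr ht.symm
  refine ((hasDerivAt_const t 1).div ((hasDerivAt_id t).const_sub 1) ht1).congr_deriv ?_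
  simp only [id]; field_simp; ring

/-- the explicit matrix S_t (σ > 0 case) solves the Riccati equation
Ṡ - R + S C₁ + C₁ᵀ S - S C₂ S = 0 on the interval where its denominator is nonzero. -/
theorem stmt17 (σ : ℝ) (hσ : 0 < σ)
    (C₁ C₂ R : Matrix (Fin 3) (Fin 3) ℝ)
    (hC₁ : C₁ = !![0, 0, 0; 1, 0, 0; 0, 0, 0])
    (hC₂ : C₂ = !![1, 0, 0; 0, 0, 0; 0, 0, 1])
    (hR : R = !![σ, 0, 0; 0, 0, 0; 0, 0, 0])
    (τ : ℝ → ℝ) (hτ : ∀ t : ℝ, τ t = (1 - t) * Real.sqrt σ)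
    (D : ℝ → ℝ) (hD : ∀ t : ℝ, D t = 2 - 2 * Real.cos (τ t) - τ t * Real.sin (τ t))
    (S : ℝ → Matrix (Fin 3) (Fin 3) ℝ)
    (hS : ∀ t : ℝ, S t =
      !![Real.sqrt σ * (Real.sin (τ t) - τ t * Real.cos (τ t)) / D t,
         (Real.sqrt σ) ^ 2 * (1 - Real.cos (τ t)) / D t, 0;
         (Real.sqrt σ) ^ 2 * (1 - Real.cos (τ t)) / D t,
         (Real.sqrt σ) ^ 3 * Real.sin (τ t) / D t, 0;
         0, 0, 1 / (1 - t)]) :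
    ∀ t ∈ Set.Ioo (0 : ℝ) 1, D t ≠ 0 → ∀ i j : Fin 3,
      HasDerivAt (fun u => S u i j)
        ((R - S t * C₁ - C₁ᵀ * S t + S t * C₂ * S t) i j) t := by
  intro t ht hDt i j
  set s := √σ
  set f := fun y => (sin y - y * cos y) / riccatiDen y
  set g := fun y => (1 - cos y) / riccatiDen y
  set h := fun y => sin y / riccatiDen y
  have hDτ : ∀ u, D u = riccatiDen ((1 - u) * s) := fun u => by rw [hD, hτ, riccatiDen]
  have hSτ : ∀ u, S u = !![s * f ((1 - u) * s), s ^ 2 * g ((1 - u) * s), 0;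
      s ^ 2 * g ((1 - u) * s), s ^ 3 * h ((1 - u) * s), 0; 0, 0, 1 / (1 - u)] := fun u => by
    simp only [hS, hDτ, hτ, f, g, h, mul_div_assoc]
  rw [hDτ] at hDt
  rw [hSτ, hC₁, hC₂, hR, show σ = s ^ 2 from (sq_sqrt hσ.le).symm, riccati_rhs_of_symm_block]
  simp_rw [hSτ]
  fin_cases i <;> fin_cases j <;> 
    simp only [of_apply, cons_val', cons_val_zero, cons_val_one, cons_val_two, empty_val',
      cons_val_fin_one, Fin.isValue, Fin.zero_eta, Fin.mk_one, Fin.reduceFinMk, head_cons, tail_cons]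
  · exact ((hasDerivAt_sin_sub_mul_cos_div_riccatiDen hDt).const_mul s).comp_one_sub_mul.congr_deriv
      (by ring)
  · exact ((hasDerivAt_one_sub_cos_div_riccatiDen hDt).const_mul (s ^ 2)).comp_one_sub_mul.congr_deriv
      (by ring)
  · exact hasDerivAt_const t 0
  · exact ((hasDerivAt_one_sub_cos_div_riccatiDen hDt).const_mul (s ^ 2)).comp_one_sub_mul.congr_deriv
      (by ring)
  · exact ((hasDerivAt_sin_div_riccatiDen hDt).const_mul (s ^ 3)).comp_one_sub_mul.congr_deriv
      (by ring)
  · exact hasDerivAt_const t 0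
  · exact hasDerivAt_const t 0
  · exact hasDerivAt_const t 0
  · exact hasDerivAt_one_div_one_sub ht.2.ne
end
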